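/- Let n, d be positive integers, F ∈ ℝ^{n×d}, y ∈ ℝⁿ, and λ > 0. Define R_λ := (nλ I_d + Fᵀ F)^{-1} Fᵀ diag(y) and M_λ := λ · diag(y)(nλ I_n + F Fᵀ)^{-1} diag(y). Then for every positive integer p and every W ∈ ℝ^{n×p}: ⟨M_λ W, W⟩ = (1/n)‖diag(y) W‖² − (1/n)‖F R_λ W‖² − λ‖R_λ W‖², where ⟨M_λ W, W⟩ := tr(Wᵀ M_λ W). Moreover, for every X ∈ ℝ^{d×p}, ⟨M_λ W, W⟩ ≤ (1/n)‖F X − diag(y) W‖² + λ‖X‖², with equality when X = R_λ W. -/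

import Mathlib

open Matrix Filter Finset
open scoped Classical

noncomputable section

/-- Frobenius inner product `⟨A, B⟩ = tr(Bᵀ A)` of real square matrices. -/
def mip {d : ℕ} (A B : Matrix (Fin d) (Fin d) ℝ) : ℝ := (Bᵀ * A).trace

/-- Squared Frobenius norm of a real matrix. -/
def frobSq {m p : ℕ} (X : Matrix (Fin m) (Fin p) ℝ) : ℝ := ∑ i, ∑ j, (X i j) ^ 2

/-- Squared Euclidean norm of a real vector. -/
def vnormSq {n : ℕ} (v : Fin n → ℝ) : ℝ := ∑ i, (v i) ^ 2

/-- Euclidean norm of a real vector. -/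
def vnorm {n : ℕ} (v : Fin n → ℝ) : ℝ := Real.sqrt (vnormSq v)

/-- Euclidean inner product of real vectors. -/
def vip {n : ℕ} (u v : Fin n → ℝ) : ℝ := ∑ i, u i * v i

/-- `ddiag A` keeps the diagonal of `A`, setting off-diagonal entries to zero. -/
def ddiag {n : ℕ} (A : Matrix (Fin n) (Fin n) ℝ) : Matrix (Fin n) (Fin n) ℝ :=
  Matrix.diagonal fun i => A i i

/-- `rowNorms M` is the vector of Euclidean norms of the rows of `M` (`|M|`). -/
def rowNorms {n k : ℕ} (M : Matrix (Fin n) (Fin k) ℝ) : Fin n → ℝ :=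
  fun i => Real.sqrt (∑ j, (M i j) ^ 2)

lemma frobSq_trace {m p : ℕ} (X : Matrix (Fin m) (Fin p) ℝ) :
    frobSq X = (Xᵀ * X).trace := by
  simp only [frobSq, Matrix.trace, Matrix.diag, Matrix.mul_apply, Matrix.transpose_apply, sq]
  exact Finset.sum_comm

lemma trace_tmul_comm {m p : ℕ} (U V : Matrix (Fin m) (Fin p) ℝ) :
    (Uᵀ * V).trace = (Vᵀ * U).trace := by
  rw [← Matrix.trace_transpose (Uᵀ * V), Matrix.transpose_mul, Matrix.transpose_transpose]

lemma frobSq_add' {m p : ℕ} (U V : Matrix (Fin m) (Fin p) ℝ) :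
    frobSq (U + V) = frobSq U + 2 * (Uᵀ * V).trace + frobSq V := by
  simp only [frobSq_trace, Matrix.transpose_add, Matrix.add_mul, Matrix.mul_add,
    Matrix.trace_add]
  have := trace_tmul_comm U V
  linarith

lemma frobSq_sub' {m p : ℕ} (U V : Matrix (Fin m) (Fin p) ℝ) :
    frobSq (U - V) = frobSq U - 2 * (Vᵀ * U).trace + frobSq V := by
  simp only [frobSq_trace, Matrix.transpose_sub, Matrix.sub_mul, Matrix.mul_sub,
    Matrix.trace_sub]
  have := trace_tmul_comm U V
  linarith

lemma frobSq_nonneg {m p : ℕ} (X : Matrix (Fin m) (Fin p) ℝ) : 0 ≤ frobSq X := by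
  unfold frobSq; positivity

/-- Ridge-regression identity for PhaseCut: `⟨M_λ W, W⟩` equals the minimum
over `X` of the regularized regression objective, attained at `X = R_λ W`. -/
theorem stmt14 {n d : ℕ} (hn : 0 < n) (hd : 0 < d)
    (F : Matrix (Fin n) (Fin d) ℝ) (y : Fin n → ℝ) (lam : ℝ) (hlam : 0 < lam)
    (Rlam : Matrix (Fin d) (Fin n) ℝ)
    (hRlam : Rlam = (((n:ℝ) * lam) • (1 : Matrix (Fin d) (Fin d) ℝ) + Fᵀ * F)⁻¹
        * Fᵀ * Matrix.diagonal y)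
    (Mlam : Matrix (Fin n) (Fin n) ℝ)
    (hMlam : Mlam = lam • (Matrix.diagonal y
        * (((n:ℝ) * lam) • (1 : Matrix (Fin n) (Fin n) ℝ) + F * Fᵀ)⁻¹
        * Matrix.diagonal y)) :
    ∀ p : ℕ, 0 < p → ∀ W : Matrix (Fin n) (Fin p) ℝ,
      ((Wᵀ * Mlam * W).trace =
          (1 / (n:ℝ)) * frobSq (Matrix.diagonal y * W)
          - (1 / (n:ℝ)) * frobSq (F * (Rlam * W)) - lam * frobSq (Rlam * W)) ∧
      (∀ X : Matrix (Fin d) (Fin p) ℝ,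
        (Wᵀ * Mlam * W).trace ≤
          (1 / (n:ℝ)) * frobSq (F * X - Matrix.diagonal y * W) + lam * frobSq X) ∧
      ((Wᵀ * Mlam * W).trace =
          (1 / (n:ℝ)) * frobSq (F * (Rlam * W) - Matrix.diagonal y * W)
          + lam * frobSq (Rlam * W)) := by
  have hn0 : (0:ℝ) < n := by exact_mod_cast hn
  have hnlam : ((n:ℝ) * lam) ≠ 0 := by positivity
  set D : Matrix (Fin n) (Fin n) ℝ := Matrix.diagonal y with hDdef
  set A : Matrix (Fin d) (Fin d) ℝ := ((n:ℝ) * lam) • 1 + Fᵀ * F with hAdef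
  have hDT : Dᵀ = D := Matrix.diagonal_transpose y
  have hApos : A.PosDef := by
    rw [hAdef, Matrix.smul_one_eq_diagonal]
    exact Matrix.PosDef.add_posSemidef
      (Matrix.posDef_diagonal_iff.mpr fun _ => by positivity)
      (by simpa using Matrix.posSemidef_conjTranspose_mul_self F)
  have hdet : IsUnit A.det := (Matrix.isUnit_iff_isUnit_det A).mp hApos.isUnit
  have hAT : Aᵀ = A := by
    rw [hAdef]; simp [Matrix.transpose_add, Matrix.transpose_smul, Matrix.transpose_mul]
  have hAinvT : (A⁻¹)ᵀ = A⁻¹ := by rw [Matrix.transpose_nonsing_inv, hAT]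
  have hBF : (((n:ℝ)*lam) • (1 : Matrix (Fin n) (Fin n) ℝ) + F * Fᵀ) * F = F * A := by
    rw [hAdef]
    simp [Matrix.add_mul, Matrix.mul_add, Matrix.smul_mul, Matrix.mul_smul, Matrix.mul_assoc]
  have hBinv : (((n:ℝ)*lam) • (1 : Matrix (Fin n) (Fin n) ℝ) + F * Fᵀ)⁻¹
      = (((n:ℝ)*lam)⁻¹) • (1 - F * (A⁻¹ * Fᵀ)) := by
    apply Matrix.inv_eq_right_inv
    rw [Matrix.mul_smul, Matrix.mul_sub, Matrix.mul_one, ← Matrix.mul_assoc, hBF,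
      Matrix.mul_assoc, Matrix.mul_nonsing_inv_cancel_left _ _ hdet]
    rw [add_sub_cancel_right, smul_smul, inv_mul_cancel₀ hnlam, one_smul]
  have hM2 : Mlam = ((n:ℝ)⁻¹) • (D * D - D * (F * (A⁻¹ * (Fᵀ * D)))) := by
    rw [hMlam, hBinv, Matrix.mul_smul, Matrix.smul_mul, smul_smul]
    congr 1
    · field_simp
    · rw [Matrix.mul_sub, Matrix.mul_one, Matrix.sub_mul]
      simp only [Matrix.mul_assoc]
  intro p hp W
  obtain ⟨G, hGdef⟩ : ∃ G' : Matrix (Fin d) (Fin p) ℝ, G' = Rlam * W := ⟨_, rfl⟩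
  rw [← hGdef]
  have hGval : G = A⁻¹ * (Fᵀ * (D * W)) := by
    rw [hGdef, hRlam]; simp only [Matrix.mul_assoc]
  have hGT : Gᵀ = Wᵀ * (D * (F * A⁻¹)) := by
    rw [hGval]
    simp only [Matrix.transpose_mul, Matrix.transpose_transpose, hAinvT, hDT, Matrix.mul_assoc]
  have hGA : Gᵀ * A = Wᵀ * (D * F) := by
    rw [hGT]
    simp only [Matrix.mul_assoc]
    rw [Matrix.nonsing_inv_mul _ hdet, Matrix.mul_one]
  obtain ⟨S, hSdef⟩ : ∃ s : ℝ, s = (Wᵀ * (D * (F * (A⁻¹ * (Fᵀ * (D * W)))))).trace := ⟨_, rfl⟩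
  obtain ⟨a, hadef⟩ : ∃ s : ℝ, s = frobSq (D * W) := ⟨_, rfl⟩
  obtain ⟨b, hbdef⟩ : ∃ s : ℝ, s = frobSq (F * G) := ⟨_, rfl⟩
  obtain ⟨g, hgdef⟩ : ∃ s : ℝ, s = frobSq G := ⟨_, rfl⟩
  have e2 : A * G = ((n:ℝ)*lam) • G + Fᵀ * (F * G) := by
    rw [hAdef, Matrix.add_mul, Matrix.smul_mul, Matrix.one_mul, Matrix.mul_assoc]
  have e1 : Gᵀ * (A * G) = Wᵀ * (D * (F * (A⁻¹ * (Fᵀ * (D * W))))) := by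
    conv_lhs => rw [← Matrix.mul_assoc, hGA]
    rw [hGval]
    simp only [Matrix.mul_assoc]
  have hS : S = ((n:ℝ) * lam) * g + b := by
    rw [hSdef, ← e1, e2, Matrix.mul_add, Matrix.mul_smul, Matrix.trace_add, Matrix.trace_smul,
      smul_eq_mul]
    congr 1
    · rw [hgdef, frobSq_trace]
    · rw [hbdef, frobSq_trace, Matrix.transpose_mul, Matrix.mul_assoc]
  have htr : (Wᵀ * Mlam * W).trace = (n:ℝ)⁻¹ * (a - S) := by
    rw [hM2, Matrix.mul_smul, Matrix.smul_mul, Matrix.trace_smul, smul_eq_mul]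
    congr 1
    rw [hadef, hSdef, frobSq_trace, Matrix.transpose_mul, hDT, Matrix.mul_sub,
      Matrix.sub_mul, Matrix.trace_sub]
    simp only [Matrix.mul_assoc]
  have hDWFG : ((D * W)ᵀ * (F * G)).trace = S := by
    rw [hSdef, Matrix.transpose_mul, hDT, hGval]
    simp only [Matrix.mul_assoc]
  have heq3 : (Wᵀ * Mlam * W).trace =
      (1 / (n:ℝ)) * frobSq (F * G - D * W) + lam * frobSq G := by
    rw [frobSq_sub', hDWFG, htr, hS, hadef, hbdef, hgdef]
    field_simp
    ring
  have heq1 : (Wᵀ * Mlam * W).trace = (1 / (n:ℝ)) * frobSq (D * W)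
      - (1 / (n:ℝ)) * frobSq (F * G) - lam * frobSq G := by
    rw [htr, hS, hadef, hbdef, hgdef]
    field_simp
    ring
  refine ⟨heq1, ?_, heq3⟩
  intro X
  have hexp : Gᵀ * A = ((n:ℝ)*lam) • Gᵀ + Gᵀ * (Fᵀ * F) := by
    rw [hAdef, Matrix.mul_add, Matrix.mul_smul, Matrix.mul_one]
  have h' : Wᵀ * (D * F) = ((n:ℝ)*lam) • Gᵀ + Gᵀ * (Fᵀ * F) := by rw [← hGA, hexp]
  have hcrossm : (F * G - D * W)ᵀ * F = (-((n:ℝ)*lam)) • Gᵀ := by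
    rw [Matrix.transpose_sub, Matrix.sub_mul, Matrix.transpose_mul, Matrix.transpose_mul, hDT,
      Matrix.mul_assoc, Matrix.mul_assoc, h', neg_smul]
    abel
  have hdecomp : F * X - D * W = F * (X - G) + (F * G - D * W) := by
    rw [Matrix.mul_sub]; abel
  have hcross : ((F * (X - G))ᵀ * (F * G - D * W)).trace
      = -((n:ℝ)*lam) * (Gᵀ * (X - G)).trace := by
    rw [trace_tmul_comm, ← Matrix.mul_assoc, hcrossm, Matrix.smul_mul, Matrix.trace_smul,
      smul_eq_mul]
  have hXdecomp : X = G + (X - G) := by abel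
  have hfX : frobSq X = frobSq G + 2 * (Gᵀ * (X - G)).trace + frobSq (X - G) := by
    conv_lhs => rw [hXdecomp]
    rw [frobSq_add']
  have h1 : frobSq (F * X - D * W) = frobSq (F * (X - G))
      + 2 * (-((n:ℝ)*lam) * (Gᵀ * (X - G)).trace) + frobSq (F * G - D * W) := by
    rw [hdecomp, frobSq_add', hcross]
  have hninv : 0 < 1 / (n:ℝ) := by positivity
  have hkey : (1 / (n:ℝ)) * (frobSq (F * (X - G))
        + 2 * (-((n:ℝ)*lam) * (Gᵀ * (X - G)).trace) + frobSq (F * G - D * W))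
      + lam * (frobSq G + 2 * (Gᵀ * (X - G)).trace + frobSq (X - G))
      = ((1 / (n:ℝ)) * frobSq (F * G - D * W) + lam * frobSq G)
        + ((1 / (n:ℝ)) * frobSq (F * (X - G)) + lam * frobSq (X - G)) := by
    field_simp
    ring
  rw [heq3, h1, hfX, hkey]
  have h2 : 0 ≤ (1 / (n:ℝ)) * frobSq (F * (X - G)) := mul_nonneg hninv.le (frobSq_nonneg _)
  have h3 : 0 ≤ lam * frobSq (X - G) := mul_nonneg hlam.le (frobSq_nonneg _)
  linarith
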